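/- Let F and G be overlapping masked IFSs whose critical itineraries agree (τ_F^-(q) = τ_G^-(p) and τ_F^+(q) = τ_G^+(p)). Then the fractal transformation h = π_G ∘ τ_F^+ : [0,1] → [0,1] is a homeomorphism. -/

import Mathlib

open Set Filter Topology

/-- Strict lexicographic order on binary strings. -/
def lexLt (σ ω : ℕ → Bool) : Prop :=
  ∃ k, (∀ j < k, σ j = ω j) ∧ σ k < ω k

/-- Lexicographic order on binary strings. -/
def lexLe (σ ω : ℕ → Bool) : Prop := lexLt σ ω ∨ σ = ω

/-- n-fold shift. -/
def shiftn (n : ℕ) (ω : ℕ → Bool) : ℕ → Bool := fun k => ω (k + n)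

/-- Plus dynamical system: boundary point goes to the 0-branch inverse `g1` side, i.e. `x ≥ q` uses `g1`. -/
noncomputable def Tplus (g0 g1 : ℝ → ℝ) (q : ℝ) (x : ℝ) : ℝ := if x < q then g0 x else g1 x

noncomputable def Tminus (g0 g1 : ℝ → ℝ) (q : ℝ) (x : ℝ) : ℝ := if x ≤ q then g0 x else g1 x

/-- Itinerary under the plus system. -/
noncomputable def tauPlus (g0 g1 : ℝ → ℝ) (q : ℝ) (x : ℝ) : ℕ → Bool :=
  fun n => decide (q ≤ (Tplus g0 g1 q)^[n] x)

/-- Itinerary under the minus system. -/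
noncomputable def tauMinus (g0 g1 : ℝ → ℝ) (q : ℝ) (x : ℝ) : ℕ → Bool :=
  fun n => decide (q < (Tminus g0 g1 q)^[n] x)

/-- Coding map of the uniform IFS with ratio `a`. -/
noncomputable def piU (a : ℝ) (ω : ℕ → Bool) : ℝ := (1 - a) * ∑' k : ℕ, (cond (ω k) (a ^ k) 0)

/-- `wordMap u0 u1 σ k = f_{σ|k} = f_{σ 0} ∘ ⋯ ∘ f_{σ k}`. -/
def wordMap (u0 u1 : ℝ → ℝ) (σ : ℕ → Bool) : ℕ → ℝ → ℝ
  | 0 => cond (σ 0) u1 u0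
  | (k+1) => fun x => wordMap u0 u1 σ k ((cond (σ (k+1)) u1 u0) x)

/-- Coding map of the IFS `(u0, u1)`. -/
noncomputable def piCode (u0 u1 : ℝ → ℝ) (σ : ℕ → Bool) : ℝ :=
  limUnder atTop (fun k => wordMap u0 u1 σ k 0)

/-- `h` is a homeomorphism of `[0,1]` onto itself. -/
def IsIccHomeo (h : ℝ → ℝ) : Prop :=
  ∃ h' : ℝ → ℝ, ContinuousOn h (Icc 0 1) ∧ ContinuousOn h' (Icc 0 1) ∧
    MapsTo h (Icc 0 1) (Icc 0 1) ∧ MapsTo h' (Icc 0 1) (Icc 0 1) ∧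
    (∀ x ∈ Icc (0:ℝ) 1, h' (h x) = x) ∧ (∀ y ∈ Icc (0:ℝ) 1, h (h' y) = y)

/-!
The plus itinerary `τ_F⁺ x` is admissible: its tails starting with `1` lie above `β = τ⁺(q)`
and those starting with `0` strictly below `α = τ⁻(q)`. Admissibility refers only to `α` and
`β`, which `F` and `G` share, so `τ_F⁺ x` is also admissible for `G`. On admissible strings
`π_G` is lexicographically monotone and `τ_G⁺ ∘ π_G` is the identity, since the first digit of
an admissible string tells on which side of the mask point its code lies. Hence `π_F ∘ τ_G⁺`
inverts `π_G ∘ τ_F⁺`; both are monotone bijections of `[0,1]`, hence continuous.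
-/

lemma lexLe_of_forall_le {σ ω : ℕ → Bool} (H : ∀ k, (∀ j < k, σ j = ω j) → σ k ≤ ω k) :
    lexLe σ ω := by
  by_cases h : σ = ω
  · exact Or.inr h
  · have hne : ∃ n, σ n ≠ ω n := Function.ne_iff.mp h
    have hagree : ∀ j < Nat.find hne, σ j = ω j := fun j hj => not_not.mp (Nat.find_min hne hj)
    exact Or.inl ⟨Nat.find hne, hagree, (H _ hagree).lt_of_ne (Nat.find_spec hne)⟩

lemma lexLe.head_le {σ ω : ℕ → Bool} (h : lexLe σ ω) : σ 0 ≤ ω 0 := by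
  rcases h with ⟨_ | k, hagree, hlt⟩ | rfl
  · exact hlt.le
  · exact (hagree 0 k.succ_pos).le
  · exact le_rfl

lemma lexLe.shiftn_one {σ ω : ℕ → Bool} (h : lexLe σ ω) (h0 : σ 0 = ω 0) :
    lexLe (shiftn 1 σ) (shiftn 1 ω) := by
  rcases h with ⟨_ | k, hagree, hlt⟩ | rfl
  · exact absurd h0 hlt.ne
  · exact Or.inl ⟨k, fun j hj => hagree (j + 1) (by omega), hlt⟩
  · exact Or.inr rfl

@[simp]
lemma shiftn_apply_zero (k : ℕ) (σ : ℕ → Bool) : shiftn k σ 0 = σ k := by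
  simp [shiftn]

lemma shiftn_shiftn (m n : ℕ) (σ : ℕ → Bool) : shiftn m (shiftn n σ) = shiftn (n + m) σ := by
  funext k
  simp only [shiftn, Nat.add_assoc, Nat.add_comm m n]

def IsAdmissible (α β σ : ℕ → Bool) : Prop :=
  ∀ n, (σ n = true → lexLe β (shiftn n σ)) ∧ (σ n = false → lexLt (shiftn n σ) α)

lemma IsAdmissible.shiftn {α β σ : ℕ → Bool} (h : IsAdmissible α β σ) (k : ℕ) :
    IsAdmissible α β (shiftn k σ) := fun n => by
  rw [shiftn_shiftn, Nat.add_comm k n]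
  exact h (n + k)

lemma le_of_forall_le_add_pow {a b c : ℝ} (hc : c < 1) (h : ∀ n : ℕ, a ≤ b + c ^ n) :
    a ≤ b := by
  refine le_of_forall_pos_le_add fun ε hε => ?_
  obtain ⟨n, hn⟩ := exists_pow_lt_of_lt_one hε hc
  linarith [h n]

lemma MonotoneOn.le_add_mul_of_le_add {f : ℝ → ℝ} {s : Set ℝ} {K : NNReal}
    (hf : MonotoneOn f s) (hK : LipschitzOnWith K f s) {u v ε : ℝ} (hu : u ∈ s) (hv : v ∈ s)
    (hε : 0 ≤ ε) (h : u ≤ v + ε) : f u ≤ f v + K * ε := by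
  rcases le_total u v with huv | hvu
  · linarith [hf hu hv huv, mul_nonneg K.coe_nonneg hε]
  · have hdist := hK.dist_le_mul u hu v hv
    rw [Real.dist_eq, Real.dist_eq, abs_of_nonneg (sub_nonneg.mpr hvu)] at hdist
    nlinarith [le_abs_self (f u - f v), K.coe_nonneg]

lemma MonotoneOn.continuousOn_of_surjOn {f : ℝ → ℝ} {s t : Set ℝ} [OrdConnected s]
    [OrdConnected t] (hf : MonotoneOn f s) (hmaps : MapsTo f s t) (hsurj : SurjOn f s t) :
    ContinuousOn f s := by
  rw [continuousOn_iff_continuous_domRestrict]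
  exact continuous_subtype_val.comp <| Monotone.continuous_of_surjective
    (f := hmaps.restrict f s t) (fun a b hab => hf a.2 b.2 hab)
    (hmaps.restrict_surjective_iff.mpr hsurj)

lemma isIccHomeo_of_monotoneOn {h h' : ℝ → ℝ} (hmono : MonotoneOn h (Icc 0 1))
    (hmono' : MonotoneOn h' (Icc 0 1)) (hmaps : MapsTo h (Icc 0 1) (Icc 0 1))
    (hmaps' : MapsTo h' (Icc 0 1) (Icc 0 1)) (hleft : LeftInvOn h' h (Icc 0 1))
    (hright : RightInvOn h' h (Icc 0 1)) : IsIccHomeo h :=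
  ⟨h', hmono.continuousOn_of_surjOn hmaps (hright.surjOn hmaps'),
    hmono'.continuousOn_of_surjOn hmaps' (hleft.surjOn hmaps),
    hmaps, hmaps', hleft, hright⟩

lemma exists_lt_one_lipschitzOnWith {f : ℝ → ℝ} {s : Set ℝ}
    (h : ∃ c : ℝ, c < 1 ∧ ∀ x ∈ s, ∀ y ∈ s, |f x - f y| ≤ c * |x - y|) :
    ∃ K : NNReal, K < 1 ∧ LipschitzOnWith K f s := by
  obtain ⟨c, hc1, hc⟩ := h
  exact ⟨c.toNNReal, Real.toNNReal_lt_one.mpr hc1,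
    LipschitzOnWith.of_dist_le' fun x hx y hy => by simpa [Real.dist_eq] using hc x hx y hy⟩

structure UnitIFS where
  f0 : ℝ → ℝ
  f1 : ℝ → ℝ
  c : NNReal
  c_lt_one : c < 1
  mapsTo_f0 : MapsTo f0 (Icc 0 1) (Icc 0 1)
  mapsTo_f1 : MapsTo f1 (Icc 0 1) (Icc 0 1)
  lipschitzOnWith_f0 : LipschitzOnWith c f0 (Icc 0 1)
  lipschitzOnWith_f1 : LipschitzOnWith c f1 (Icc 0 1)

namespace UnitIFS

variable (S : UnitIFS)

def branch (d : Bool) : ℝ → ℝ := cond d S.f1 S.f0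

lemma mapsTo_branch (d : Bool) : MapsTo (S.branch d) (Icc 0 1) (Icc 0 1) := by
  cases d
  exacts [S.mapsTo_f0, S.mapsTo_f1]

lemma lipschitzOnWith_branch (d : Bool) : LipschitzOnWith S.c (S.branch d) (Icc 0 1) := by
  cases d
  exacts [S.lipschitzOnWith_f0, S.lipschitzOnWith_f1]

lemma mapsTo_wordMap (σ : ℕ → Bool) (k : ℕ) :
    MapsTo (wordMap S.f0 S.f1 σ k) (Icc 0 1) (Icc 0 1) := by
  induction k with
  | zero => exact S.mapsTo_branch (σ 0)
  | succ k ih => exact ih.comp (S.mapsTo_branch (σ (k + 1)))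

lemma lipschitzOnWith_wordMap (σ : ℕ → Bool) (k : ℕ) :
    LipschitzOnWith (S.c ^ (k + 1)) (wordMap S.f0 S.f1 σ k) (Icc 0 1) := by
  induction k with
  | zero =>
    rw [zero_add, pow_one]
    exact S.lipschitzOnWith_branch (σ 0)
  | succ k ih =>
    rw [pow_succ]
    exact ih.comp (S.lipschitzOnWith_branch (σ (k + 1))) (S.mapsTo_branch _)

lemma wordMap_succ_eq_branch (σ : ℕ → Bool) (k : ℕ) (x : ℝ) :
    wordMap S.f0 S.f1 σ (k + 1) x = S.branch (σ 0) (wordMap S.f0 S.f1 (shiftn 1 σ) k x) := by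
  induction k generalizing x with
  | zero => rfl
  | succ k ih => exact ih _

lemma tendsto_wordMap_piCode (σ : ℕ → Bool) :
    Tendsto (fun k => wordMap S.f0 S.f1 σ k 0) atTop (𝓝 (piCode S.f0 S.f1 σ)) := by
  refine CauchySeq.tendsto_limUnder (cauchySeq_of_le_geometric S.c S.c S.c_lt_one fun k => ?_)
  have h0 : (0 : ℝ) ∈ Icc 0 1 := left_mem_Icc.mpr zero_le_one
  calc dist (wordMap S.f0 S.f1 σ k 0) (wordMap S.f0 S.f1 σ k (S.branch (σ (k + 1)) 0))
      ≤ ↑(S.c ^ (k + 1)) * dist 0 (S.branch (σ (k + 1)) 0) :=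
        (S.lipschitzOnWith_wordMap σ k).dist_le_mul _ h0 _ (S.mapsTo_branch _ h0)
    _ ≤ ↑(S.c ^ (k + 1)) * 1 :=
        mul_le_mul_of_nonneg_left (Real.dist_le_of_mem_Icc_01 h0 (S.mapsTo_branch _ h0))
          (by positivity)
    _ = S.c * S.c ^ k := by push_cast; ring

lemma piCode_mem (σ : ℕ → Bool) : piCode S.f0 S.f1 σ ∈ Icc (0 : ℝ) 1 :=
  isClosed_Icc.mem_of_tendsto (S.tendsto_wordMap_piCode σ)
    (Eventually.of_forall fun k => S.mapsTo_wordMap σ k (left_mem_Icc.mpr zero_le_one))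

lemma piCode_eq_branch (σ : ℕ → Bool) :
    piCode S.f0 S.f1 σ = S.branch (σ 0) (piCode S.f0 S.f1 (shiftn 1 σ)) := by
  have hlim := S.tendsto_wordMap_piCode (shiftn 1 σ)
  have hcont := (S.lipschitzOnWith_branch (σ 0)).continuousOn.continuousWithinAt
    (S.piCode_mem (shiftn 1 σ))
  refine tendsto_nhds_unique ((S.tendsto_wordMap_piCode σ).comp (tendsto_add_atTop_nat 1)) ?_
  simp only [Function.comp_def, wordMap_succ_eq_branch]
  exact hcont.tendsto.comp <| tendsto_nhdsWithin_iff.mpr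
    ⟨hlim, Eventually.of_forall fun k => S.mapsTo_wordMap _ k (left_mem_Icc.mpr zero_le_one)⟩

lemma piCode_eq_of_branch {s : Set ℝ} (hs : s ⊆ Icc 0 1) {χ : ℝ → ℕ → Bool} {T : ℝ → ℝ}
    (hT : MapsTo T s s) (hbranch : ∀ x ∈ s, S.branch (χ x 0) (T x) = x)
    (hshift : ∀ x ∈ s, shiftn 1 (χ x) = χ (T x)) {x : ℝ} (hx : x ∈ s) :
    piCode S.f0 S.f1 (χ x) = x := by
  have key : ∀ n : ℕ, ∀ x ∈ s, dist (piCode S.f0 S.f1 (χ x)) x ≤ 0 + (S.c : ℝ) ^ n := by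
    intro n
    induction n with
    | zero => exact fun x hx => by simpa using Real.dist_le_of_mem_Icc_01 (S.piCode_mem _) (hs hx)
    | succ n ih =>
      intro x hx
      calc dist (piCode S.f0 S.f1 (χ x)) x
          = dist (S.branch (χ x 0) (piCode S.f0 S.f1 (χ (T x)))) (S.branch (χ x 0) (T x)) := by
            rw [S.piCode_eq_branch, hshift x hx, hbranch x hx]
        _ ≤ S.c * dist (piCode S.f0 S.f1 (χ (T x))) (T x) :=
            (S.lipschitzOnWith_branch _).dist_le_mul _ (S.piCode_mem _) _ (hs (hT hx))
        _ ≤ S.c * (0 + (S.c : ℝ) ^ n) := by gcongr; exact ih _ (hT hx)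
        _ = 0 + (S.c : ℝ) ^ (n + 1) := by ring
  exact dist_le_zero.mp (le_of_forall_le_add_pow S.c_lt_one fun n => key n x hx)

end UnitIFS

structure MaskedIFS extends UnitIFS where
  g0 : ℝ → ℝ
  g1 : ℝ → ℝ
  q : ℝ
  monotoneOn_f0 : MonotoneOn f0 (Icc 0 1)
  monotoneOn_f1 : MonotoneOn f1 (Icc 0 1)
  f0_zero : f0 0 = 0
  f1_one : f1 1 = 1
  q_mem : q ∈ Icc (f1 0) (f0 1)
  leftInvOn_g0 : LeftInvOn g0 f0 (Icc 0 1)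
  leftInvOn_g1 : LeftInvOn g1 f1 (Icc 0 1)

namespace MaskedIFS

variable (S : MaskedIFS)

def invBranch (d : Bool) : ℝ → ℝ := cond d S.g1 S.g0

def branchRange (d : Bool) : Set ℝ := cond d (Icc (S.f1 0) 1) (Icc 0 (S.f0 1))

lemma monotoneOn_branch (d : Bool) : MonotoneOn (S.branch d) (Icc 0 1) := by
  cases d
  exacts [S.monotoneOn_f0, S.monotoneOn_f1]

lemma leftInvOn_invBranch (d : Bool) : LeftInvOn (S.invBranch d) (S.branch d) (Icc 0 1) := by
  cases d
  exacts [S.leftInvOn_g0, S.leftInvOn_g1]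

lemma surjOn_branch (d : Bool) : SurjOn (S.branch d) (Icc 0 1) (S.branchRange d) := by
  have hivt := intermediate_value_Icc zero_le_one (S.lipschitzOnWith_branch d).continuousOn
  cases d
  · simpa [SurjOn, UnitIFS.branch, branchRange, S.f0_zero] using hivt
  · simpa [SurjOn, UnitIFS.branch, branchRange, S.f1_one] using hivt

lemma mapsTo_invBranch (d : Bool) : MapsTo (S.invBranch d) (S.branchRange d) (Icc 0 1) :=
  (S.leftInvOn_invBranch d).mapsTo (S.surjOn_branch d)

lemma rightInvOn_invBranch (d : Bool) :
    RightInvOn (S.invBranch d) (S.branch d) (S.branchRange d) :=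
  (S.leftInvOn_invBranch d).rightInvOn_image.mono (S.surjOn_branch d)

lemma strictMonoOn_invBranch (d : Bool) : StrictMonoOn (S.invBranch d) (S.branchRange d) := by
  intro x hx y hy hxy
  by_contra! hle
  have := S.monotoneOn_branch d (S.mapsTo_invBranch d hy) (S.mapsTo_invBranch d hx) hle
  rw [S.rightInvOn_invBranch d hx, S.rightInvOn_invBranch d hy] at this
  exact hxy.not_ge this

lemma q_mem_Icc : S.q ∈ Icc (0 : ℝ) 1 :=
  ⟨(S.mapsTo_f1 (left_mem_Icc.mpr zero_le_one)).1.trans S.q_mem.1,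
    S.q_mem.2.trans (S.mapsTo_f0 (right_mem_Icc.mpr zero_le_one)).2⟩

-- A mask rule `D` picks the branch `D x` whose inverse is applied at `x`; the plus and minus
-- rules differ only at the mask point `q`.

noncomputable def step (D : ℝ → Bool) (x : ℝ) : ℝ := S.invBranch (D x) x

noncomputable def itin (D : ℝ → Bool) (x : ℝ) : ℕ → Bool := fun n => D ((S.step D)^[n] x)

@[simp]
lemma itin_zero (D : ℝ → Bool) (x : ℝ) : S.itin D x 0 = D x := rfl

noncomputable def plusRule (x : ℝ) : Bool := decide (S.q ≤ x)

noncomputable def minusRule (x : ℝ) : Bool := decide (S.q < x)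

noncomputable def alpha : ℕ → Bool := S.itin S.minusRule S.q

noncomputable def beta : ℕ → Bool := S.itin S.plusRule S.q

lemma tauPlus_eq_itin : tauPlus S.g0 S.g1 S.q = S.itin S.plusRule := by
  have hT : Tplus S.g0 S.g1 S.q = S.step S.plusRule := by
    funext x
    rcases lt_or_ge x S.q with h | h
    · simp [Tplus, step, plusRule, invBranch, h, h.not_ge]
    · simp [Tplus, step, plusRule, invBranch, h, h.not_gt]
  funext x n
  simp only [tauPlus, hT, itin, plusRule]

lemma tauMinus_eq_itin : tauMinus S.g0 S.g1 S.q = S.itin S.minusRule := by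
  have hT : Tminus S.g0 S.g1 S.q = S.step S.minusRule := by
    funext x
    rcases le_or_gt x S.q with h | h
    · simp [Tminus, step, minusRule, invBranch, h, h.not_gt]
    · simp [Tminus, step, minusRule, invBranch, h, h.not_ge]
  funext x n
  simp only [tauMinus, hT, itin, minusRule]

def IsMaskRule (D : ℝ → Bool) : Prop := ∀ x ∈ Icc (0 : ℝ) 1, x ∈ S.branchRange (D x)

lemma isMaskRule_plusRule : S.IsMaskRule S.plusRule := by
  intro x hx
  by_cases h : S.q ≤ x
  · simpa [plusRule, branchRange, h] using ⟨S.q_mem.1.trans h, hx.2⟩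
  · simpa [plusRule, branchRange, h] using ⟨hx.1, (not_le.mp h).le.trans S.q_mem.2⟩

lemma isMaskRule_minusRule : S.IsMaskRule S.minusRule := by
  intro x hx
  by_cases h : S.q < x
  · simpa [minusRule, branchRange, h] using ⟨S.q_mem.1.trans h.le, hx.2⟩
  · simpa [minusRule, branchRange, h] using ⟨hx.1, (not_lt.mp h).trans S.q_mem.2⟩

lemma shiftn_itin (D : ℝ → Bool) (x : ℝ) (n : ℕ) :
    shiftn n (S.itin D x) = S.itin D ((S.step D)^[n] x) := by
  funext k
  simp only [shiftn, itin, Function.iterate_add_apply]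

lemma step_piCode {D : ℝ → Bool} {σ : ℕ → Bool} (h0 : σ 0 = D (piCode S.f0 S.f1 σ)) :
    S.step D (piCode S.f0 S.f1 σ) = piCode S.f0 S.f1 (shiftn 1 σ) :=
  calc S.step D (piCode S.f0 S.f1 σ)
      = S.invBranch (σ 0) (S.branch (σ 0) (piCode S.f0 S.f1 (shiftn 1 σ))) := by
        rw [step, ← h0, ← S.piCode_eq_branch]
    _ = piCode S.f0 S.f1 (shiftn 1 σ) := S.leftInvOn_invBranch _ (S.piCode_mem _)

lemma iterate_step_piCode {D : ℝ → Bool} {σ : ℕ → Bool} {k : ℕ}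
    (h : ∀ j < k, σ j = S.itin D (piCode S.f0 S.f1 σ) j) :
    (S.step D)^[k] (piCode S.f0 S.f1 σ) = piCode S.f0 S.f1 (shiftn k σ) := by
  induction k with
  | zero => rfl
  | succ k ih =>
    have hk := ih fun j hj => h j (by omega)
    have hhead : shiftn k σ 0 = D (piCode S.f0 S.f1 (shiftn k σ)) := by
      rw [← hk, shiftn_apply_zero]
      exact h k k.lt_succ_self
    rw [Function.iterate_succ_apply', hk, S.step_piCode hhead, shiftn_shiftn]

lemma itin_piCode {D : ℝ → Bool} {σ : ℕ → Bool}
    (h : ∀ k, D (piCode S.f0 S.f1 (shiftn k σ)) = σ k) :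
    S.itin D (piCode S.f0 S.f1 σ) = σ := by
  funext k
  induction k using Nat.strong_induction_on with
  | _ k ih =>
    show D ((S.step D)^[k] _) = σ k
    rw [S.iterate_step_piCode fun j hj => (ih j hj).symm]
    exact h k

section Rule

variable {S} {D : ℝ → Bool}

lemma IsMaskRule.mapsTo_step (hD : S.IsMaskRule D) :
    MapsTo (S.step D) (Icc 0 1) (Icc 0 1) :=
  fun x hx => S.mapsTo_invBranch (D x) (hD x hx)

lemma IsMaskRule.branch_step (hD : S.IsMaskRule D) {x : ℝ}
    (hx : x ∈ Icc (0 : ℝ) 1) : S.branch (D x) (S.step D x) = x :=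
  S.rightInvOn_invBranch (D x) (hD x hx)

lemma IsMaskRule.piCode_itin (hD : S.IsMaskRule D) {x : ℝ}
    (hx : x ∈ Icc (0 : ℝ) 1) : piCode S.f0 S.f1 (S.itin D x) = x :=
  S.piCode_eq_of_branch subset_rfl hD.mapsTo_step (fun _ => hD.branch_step) (fun _ _ => rfl) hx

lemma lexLe_itin_of_rel {E : ℝ → Bool} (hD : S.IsMaskRule D)
    (hE : S.IsMaskRule E) {R : ℝ → ℝ → Prop}
    (hdigit : ∀ x y, R x y → D x ≤ E y)
    (hinv : ∀ d, ∀ x ∈ S.branchRange d, ∀ y ∈ S.branchRange d, R x y →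
      R (S.invBranch d x) (S.invBranch d y))
    {x y : ℝ} (hx : x ∈ Icc (0 : ℝ) 1) (hy : y ∈ Icc (0 : ℝ) 1) (hxy : R x y) :
    lexLe (S.itin D x) (S.itin E y) := by
  refine lexLe_of_forall_le fun k hk => hdigit _ _ ?_
  induction k with
  | zero => exact hxy
  | succ k ih =>
    have hdk : D ((S.step D)^[k] x) = E ((S.step E)^[k] y) := hk k k.lt_succ_self
    have hxk := hD _ (hD.mapsTo_step.iterate k hx)
    rw [hdk] at hxk
    rw [Function.iterate_succ_apply', Function.iterate_succ_apply', step, step, hdk]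
    exact hinv _ _ hxk _ (hE _ (hE.mapsTo_step.iterate k hy)) (ih fun j hj => hk j (by omega))

end Rule

lemma plusRule_le_plusRule {x y : ℝ} (hxy : x ≤ y) : S.plusRule x ≤ S.plusRule y := by
  by_cases h : S.q ≤ x
  · simp [plusRule, h, h.trans hxy]
  · simp [plusRule, h]

lemma plusRule_le_minusRule {x y : ℝ} (hxy : x < y) : S.plusRule x ≤ S.minusRule y := by
  by_cases h : S.q ≤ x
  · simp [plusRule, minusRule, h, h.trans_lt hxy]
  · simp [plusRule, h]

lemma lexLe_itin_plus {x y : ℝ} (hx : x ∈ Icc (0 : ℝ) 1) (hy : y ∈ Icc (0 : ℝ) 1)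
    (hxy : x ≤ y) : lexLe (S.itin S.plusRule x) (S.itin S.plusRule y) :=
  lexLe_itin_of_rel S.isMaskRule_plusRule S.isMaskRule_plusRule (R := (· ≤ ·))
    (fun _ _ => S.plusRule_le_plusRule)
    (fun d _ hx _ hy => (S.strictMonoOn_invBranch d).monotoneOn hx hy) hx hy hxy

lemma lexLe_itin_plus_minus {x y : ℝ} (hx : x ∈ Icc (0 : ℝ) 1) (hy : y ∈ Icc (0 : ℝ) 1)
    (hxy : x < y) : lexLe (S.itin S.plusRule x) (S.itin S.minusRule y) :=
  lexLe_itin_of_rel S.isMaskRule_plusRule S.isMaskRule_minusRule (R := (· < ·))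
    (fun _ _ => S.plusRule_le_minusRule) (fun d _ hx _ hy => S.strictMonoOn_invBranch d hx hy)
    hx hy hxy

/-- Proved through `x ≤ π σ + cⁿ` by induction on `n`: when the first digits agree, pass to the
tails, the branch being monotone and `c`-Lipschitz; otherwise `x < q` and admissibility gives
`β ≤ σ`, which compares `q` itself with `σ`. -/
lemma le_piCode_of_lexLe {σ : ℕ → Bool} (hσ : IsAdmissible S.alpha S.beta σ) {x : ℝ}
    (hx : x ∈ Icc (0 : ℝ) 1) (h : lexLe (S.itin S.plusRule x) σ) : x ≤ piCode S.f0 S.f1 σ := by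
  have hD := S.isMaskRule_plusRule
  suffices key : ∀ n : ℕ, ∀ σ, IsAdmissible S.alpha S.beta σ → ∀ x ∈ Icc (0 : ℝ) 1,
      lexLe (S.itin S.plusRule x) σ → x ≤ piCode S.f0 S.f1 σ + (S.c : ℝ) ^ n from
    le_of_forall_le_add_pow S.c_lt_one fun n => key n σ hσ x hx h
  intro n
  induction n with
  | zero =>
    intro σ _ x hx _
    linarith [hx.2, (S.piCode_mem σ).1, pow_zero (S.c : ℝ)]
  | succ n ih =>
    have sameHead : ∀ σ, IsAdmissible S.alpha S.beta σ → ∀ x ∈ Icc (0 : ℝ) 1,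
        lexLe (S.itin S.plusRule x) σ → S.plusRule x = σ 0 →
        x ≤ piCode S.f0 S.f1 σ + (S.c : ℝ) ^ (n + 1) := by
      intro σ hσ x hx h h0
      have htail := h.shiftn_one h0
      rw [S.shiftn_itin, Function.iterate_one] at htail
      have := (S.monotoneOn_branch (σ 0)).le_add_mul_of_le_add (S.lipschitzOnWith_branch _)
        (hD.mapsTo_step hx) (S.piCode_mem _) (by positivity)
        (ih _ (hσ.shiftn 1) _ (hD.mapsTo_step hx) htail)
      rwa [← h0, hD.branch_step hx, h0, ← S.piCode_eq_branch, ← pow_succ'] at this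
    intro σ hσ x hx h
    by_cases h0 : S.plusRule x = σ 0
    · exact sameHead σ hσ x hx h h0
    obtain ⟨hx0, hσ0⟩ := Bool.lt_iff.mp (h.head_le.lt_of_ne h0)
    have hxq : x < S.q := by simpa [plusRule] using hx0
    have hq := sameHead σ hσ S.q S.q_mem_Icc ((hσ 0).1 hσ0) (by simp [plusRule, hσ0])
    linarith

lemma piCode_le_of_lexLe {σ : ℕ → Bool} (hσ : IsAdmissible S.alpha S.beta σ) {x : ℝ}
    (hx : x ∈ Icc (0 : ℝ) 1) (h : lexLe σ (S.itin S.minusRule x)) : piCode S.f0 S.f1 σ ≤ x := by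
  have hD := S.isMaskRule_minusRule
  suffices key : ∀ n : ℕ, ∀ σ, IsAdmissible S.alpha S.beta σ → ∀ x ∈ Icc (0 : ℝ) 1,
      lexLe σ (S.itin S.minusRule x) → piCode S.f0 S.f1 σ ≤ x + (S.c : ℝ) ^ n from
    le_of_forall_le_add_pow S.c_lt_one fun n => key n σ hσ x hx h
  intro n
  induction n with
  | zero =>
    intro σ _ x hx _
    linarith [hx.1, (S.piCode_mem σ).2, pow_zero (S.c : ℝ)]
  | succ n ih =>
    have sameHead : ∀ σ, IsAdmissible S.alpha S.beta σ → ∀ x ∈ Icc (0 : ℝ) 1,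
        lexLe σ (S.itin S.minusRule x) → σ 0 = S.minusRule x →
        piCode S.f0 S.f1 σ ≤ x + (S.c : ℝ) ^ (n + 1) := by
      intro σ hσ x hx h h0
      have htail := h.shiftn_one h0
      rw [S.shiftn_itin, Function.iterate_one] at htail
      have := (S.monotoneOn_branch (σ 0)).le_add_mul_of_le_add (S.lipschitzOnWith_branch _)
        (S.piCode_mem _) (hD.mapsTo_step hx) (by positivity)
        (ih _ (hσ.shiftn 1) _ (hD.mapsTo_step hx) htail)
      rwa [← S.piCode_eq_branch, h0, hD.branch_step hx, ← pow_succ'] at this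
    intro σ hσ x hx h
    by_cases h0 : σ 0 = S.minusRule x
    · exact sameHead σ hσ x hx h h0
    obtain ⟨hσ0, hx0⟩ := Bool.lt_iff.mp (h.head_le.lt_of_ne h0)
    have hqx : S.q < x := by simpa [minusRule] using hx0
    have hq := sameHead σ hσ S.q S.q_mem_Icc (Or.inl ((hσ 0).2 hσ0)) (by simp [minusRule, hσ0])
    linarith

/-- A string starting with `0` cannot code `q`: the minus orbit of `q` follows it up to the
first digit where it drops below `α`, and the tail there starts with `0` yet codes a point
above `q`. -/
lemma plusRule_piCode {σ : ℕ → Bool} (hσ : IsAdmissible S.alpha S.beta σ) :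
    S.plusRule (piCode S.f0 S.f1 σ) = σ 0 := by
  cases h0 : σ 0
  · have hlt : lexLt σ S.alpha := (hσ 0).2 h0
    suffices piCode S.f0 S.f1 σ < S.q by simpa [plusRule] using this
    refine (S.piCode_le_of_lexLe hσ S.q_mem_Icc (Or.inl hlt)).lt_of_ne fun heq => ?_
    obtain ⟨k, hagree, hk⟩ := hlt
    obtain ⟨hσk, hαk⟩ := Bool.lt_iff.mp hk
    have horbit : (S.step S.minusRule)^[k] S.q = piCode S.f0 S.f1 (shiftn k σ) := by
      rw [← heq]
      exact S.iterate_step_piCode fun j hj => by rw [heq]; exact hagree j hj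
    have hgt : S.q < piCode S.f0 S.f1 (shiftn k σ) := by
      rw [← horbit]
      simpa [alpha, itin, minusRule] using hαk
    have hle := S.piCode_le_of_lexLe (hσ.shiftn k) S.q_mem_Icc
      (Or.inl ((hσ.shiftn k 0).2 (by rwa [shiftn_apply_zero])))
    exact hgt.not_ge hle
  · simpa [plusRule] using S.le_piCode_of_lexLe hσ S.q_mem_Icc ((hσ 0).1 h0)

lemma itin_plus_piCode {σ : ℕ → Bool} (hσ : IsAdmissible S.alpha S.beta σ) :
    S.itin S.plusRule (piCode S.f0 S.f1 σ) = σ :=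
  S.itin_piCode fun k => by rw [S.plusRule_piCode (hσ.shiftn k), shiftn_apply_zero]

lemma piCode_le_piCode {ρ σ : ℕ → Bool} (hρ : IsAdmissible S.alpha S.beta ρ)
    (hσ : IsAdmissible S.alpha S.beta σ) (h : lexLe ρ σ) :
    piCode S.f0 S.f1 ρ ≤ piCode S.f0 S.f1 σ :=
  S.le_piCode_of_lexLe hσ (S.piCode_mem ρ) (by rwa [S.itin_plus_piCode hρ])

lemma isAdmissible_itin_plus {x : ℝ} (hx : x ∈ Icc (0 : ℝ) 1) :
    IsAdmissible S.alpha S.beta (S.itin S.plusRule x) := by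
  intro n
  rw [S.shiftn_itin]
  have hy := S.isMaskRule_plusRule.mapsTo_step.iterate n hx
  set y := (S.step S.plusRule)^[n] x
  refine ⟨fun h1 => S.lexLe_itin_plus S.q_mem_Icc hy (by simpa [itin, plusRule] using h1),
    fun h0 => ?_⟩
  have hyq : y < S.q := by simpa [itin, plusRule] using h0
  refine (S.lexLe_itin_plus_minus hy S.q_mem_Icc hyq).resolve_right fun heq => hyq.ne ?_
  have := congrArg (piCode S.f0 S.f1) heq
  rwa [S.isMaskRule_plusRule.piCode_itin hy,
    S.isMaskRule_minusRule.piCode_itin S.q_mem_Icc] at this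

noncomputable def fractalTransform (F G : MaskedIFS) (x : ℝ) : ℝ :=
  piCode G.f0 G.f1 (F.itin F.plusRule x)

lemma mapsTo_fractalTransform (F G : MaskedIFS) :
    MapsTo (fractalTransform F G) (Icc 0 1) (Icc 0 1) :=
  fun _ _ => G.piCode_mem _

section Pair

variable {F G : MaskedIFS}

lemma isAdmissible_itin_plus_of_eq (hα : F.alpha = G.alpha) (hβ : F.beta = G.beta) {x : ℝ}
    (hx : x ∈ Icc (0 : ℝ) 1) :
    IsAdmissible G.alpha G.beta (F.itin F.plusRule x) :=
  hα ▸ hβ ▸ F.isAdmissible_itin_plus hx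

lemma monotoneOn_fractalTransform (hα : F.alpha = G.alpha) (hβ : F.beta = G.beta) :
    MonotoneOn (fractalTransform F G) (Icc 0 1) :=
  fun _ hx _ hy hxy => G.piCode_le_piCode (isAdmissible_itin_plus_of_eq hα hβ hx)
    (isAdmissible_itin_plus_of_eq hα hβ hy) (F.lexLe_itin_plus hx hy hxy)

lemma leftInvOn_fractalTransform (hα : F.alpha = G.alpha) (hβ : F.beta = G.beta) :
    LeftInvOn (fractalTransform G F) (fractalTransform F G) (Icc 0 1) := fun x hx => by
  rw [fractalTransform, fractalTransform,
    G.itin_plus_piCode (isAdmissible_itin_plus_of_eq hα hβ hx),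
    F.isMaskRule_plusRule.piCode_itin hx]

theorem isIccHomeo_fractalTransform (hα : F.alpha = G.alpha) (hβ : F.beta = G.beta) :
    IsIccHomeo (fractalTransform F G) :=
  isIccHomeo_of_monotoneOn (monotoneOn_fractalTransform hα hβ)
    (monotoneOn_fractalTransform hα.symm hβ.symm) (mapsTo_fractalTransform F G)
    (mapsTo_fractalTransform G F) (leftInvOn_fractalTransform hα hβ)
    (leftInvOn_fractalTransform hα.symm hβ.symm)

end Pair

lemma exists_fields_eq {f0 f1 g0 g1 : ℝ → ℝ} {q : ℝ}
    (hf0m : MonotoneOn f0 (Icc 0 1)) (hf1m : MonotoneOn f1 (Icc 0 1))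
    (hf0map : MapsTo f0 (Icc 0 1) (Icc 0 1)) (hf1map : MapsTo f1 (Icc 0 1) (Icc 0 1))
    (hf0lip : ∃ c : ℝ, c < 1 ∧ ∀ x ∈ Icc (0 : ℝ) 1, ∀ y ∈ Icc (0 : ℝ) 1,
      |f0 x - f0 y| ≤ c * |x - y|)
    (hf1lip : ∃ c : ℝ, c < 1 ∧ ∀ x ∈ Icc (0 : ℝ) 1, ∀ y ∈ Icc (0 : ℝ) 1,
      |f1 x - f1 y| ≤ c * |x - y|)
    (hf00 : f0 0 = 0) (hf11 : f1 1 = 1) (hq : q ∈ Icc (f1 0) (f0 1))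
    (hg0 : LeftInvOn g0 f0 (Icc 0 1)) (hg1 : LeftInvOn g1 f1 (Icc 0 1)) :
    ∃ S : MaskedIFS, S.f0 = f0 ∧ S.f1 = f1 ∧ S.g0 = g0 ∧ S.g1 = g1 ∧ S.q = q := by
  obtain ⟨K0, hK0, hl0⟩ := exists_lt_one_lipschitzOnWith hf0lip
  obtain ⟨K1, hK1, hl1⟩ := exists_lt_one_lipschitzOnWith hf1lip
  exact ⟨{ f0, f1, g0, g1, q
           c := max K0 K1
           c_lt_one := max_lt hK0 hK1
           mapsTo_f0 := hf0map
           mapsTo_f1 := hf1map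
           lipschitzOnWith_f0 := hl0.weaken (le_max_left _ _)
           lipschitzOnWith_f1 := hl1.weaken (le_max_right _ _)
           monotoneOn_f0 := hf0m
           monotoneOn_f1 := hf1m
           f0_zero := hf00
           f1_one := hf11
           q_mem := hq
           leftInvOn_g0 := hg0
           leftInvOn_g1 := hg1 }, rfl, rfl, rfl, rfl, rfl⟩

end MaskedIFS

theorem stmt12_general
    (f0 f1 g0 g1 : ℝ → ℝ) (q : ℝ)
    (hf0m : StrictMonoOn f0 (Icc 0 1)) (hf1m : StrictMonoOn f1 (Icc 0 1))
    (hf0map : MapsTo f0 (Icc 0 1) (Icc 0 1)) (hf1map : MapsTo f1 (Icc 0 1) (Icc 0 1))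
    (hf0lip : ∃ c, 0 ≤ c ∧ c < 1 ∧ ∀ x ∈ Icc (0:ℝ) 1, ∀ y ∈ Icc (0:ℝ) 1, |f0 x - f0 y| ≤ c * |x - y|)
    (hf1lip : ∃ c, 0 ≤ c ∧ c < 1 ∧ ∀ x ∈ Icc (0:ℝ) 1, ∀ y ∈ Icc (0:ℝ) 1, |f1 x - f1 y| ≤ c * |x - y|)
    (hf00 : f0 0 = 0) (hf11 : f1 1 = 1)
    (hq : q ∈ Ioo (f1 0) (f0 1))
    (hg0 : ∀ x ∈ Icc (0:ℝ) 1, g0 (f0 x) = x) (hg1 : ∀ x ∈ Icc (0:ℝ) 1, g1 (f1 x) = x)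
    (e0 e1 k0 k1 : ℝ → ℝ) (p : ℝ)
    (he0m : StrictMonoOn e0 (Icc 0 1)) (he1m : StrictMonoOn e1 (Icc 0 1))
    (he0map : MapsTo e0 (Icc 0 1) (Icc 0 1)) (he1map : MapsTo e1 (Icc 0 1) (Icc 0 1))
    (he0lip : ∃ c, 0 ≤ c ∧ c < 1 ∧ ∀ x ∈ Icc (0:ℝ) 1, ∀ y ∈ Icc (0:ℝ) 1, |e0 x - e0 y| ≤ c * |x - y|)
    (he1lip : ∃ c, 0 ≤ c ∧ c < 1 ∧ ∀ x ∈ Icc (0:ℝ) 1, ∀ y ∈ Icc (0:ℝ) 1, |e1 x - e1 y| ≤ c * |x - y|)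
    (he00 : e0 0 = 0) (he11 : e1 1 = 1)
    (hp : p ∈ Ioo (e1 0) (e0 1))
    (hk0 : ∀ x ∈ Icc (0:ℝ) 1, k0 (e0 x) = x) (hk1 : ∀ x ∈ Icc (0:ℝ) 1, k1 (e1 x) = x)
    (halpha : tauMinus g0 g1 q q = tauMinus k0 k1 p p)
    (hbeta : tauPlus g0 g1 q q = tauPlus k0 k1 p p) :
    IsIccHomeo (fun x => piCode e0 e1 (tauPlus g0 g1 q x)) := by
  obtain ⟨F, rfl, rfl, rfl, rfl, rfl⟩ := MaskedIFS.exists_fields_eq hf0m.monotoneOn hf1m.monotoneOn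
    hf0map hf1map (hf0lip.imp fun _ h => h.2) (hf1lip.imp fun _ h => h.2) hf00 hf11
    (Ioo_subset_Icc_self hq) hg0 hg1
  obtain ⟨G, rfl, rfl, rfl, rfl, rfl⟩ := MaskedIFS.exists_fields_eq he0m.monotoneOn he1m.monotoneOn
    he0map he1map (he0lip.imp fun _ h => h.2) (he1lip.imp fun _ h => h.2) he00 he11
    (Ioo_subset_Icc_self hp) hk0 hk1
  rw [F.tauMinus_eq_itin, G.tauMinus_eq_itin] at halpha
  rw [F.tauPlus_eq_itin, G.tauPlus_eq_itin] at hbeta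
  rw [F.tauPlus_eq_itin]
  exact MaskedIFS.isIccHomeo_fractalTransform halpha hbeta

/-- If the critical itineraries of `F` and `G` agree, then the fractal transformation
`π_G ∘ τ_F^+` is a homeomorphism of `[0,1]`. -/
theorem stmt12
    (f0 f1 g0 g1 : ℝ → ℝ) (q : ℝ)
    (hf0m : StrictMonoOn f0 (Icc 0 1)) (hf1m : StrictMonoOn f1 (Icc 0 1))
    (hf0c : ContinuousOn f0 (Icc 0 1)) (hf1c : ContinuousOn f1 (Icc 0 1))
    (hf0map : MapsTo f0 (Icc 0 1) (Icc 0 1)) (hf1map : MapsTo f1 (Icc 0 1) (Icc 0 1))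
    (hf0lip : ∃ c, 0 ≤ c ∧ c < 1 ∧ ∀ x ∈ Icc (0:ℝ) 1, ∀ y ∈ Icc (0:ℝ) 1, |f0 x - f0 y| ≤ c * |x - y|)
    (hf1lip : ∃ c, 0 ≤ c ∧ c < 1 ∧ ∀ x ∈ Icc (0:ℝ) 1, ∀ y ∈ Icc (0:ℝ) 1, |f1 x - f1 y| ≤ c * |x - y|)
    (hf00 : f0 0 = 0) (hf11 : f1 1 = 1)
    (hf10pos : 0 < f1 0) (hoverf0f1 : f1 0 < f0 1) (hf01lt : f0 1 < 1)
    (hq : q ∈ Ioo (f1 0) (f0 1))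
    (hg0 : ∀ x ∈ Icc (0:ℝ) 1, g0 (f0 x) = x) (hg1 : ∀ x ∈ Icc (0:ℝ) 1, g1 (f1 x) = x)
    (e0 e1 k0 k1 : ℝ → ℝ) (p : ℝ)
    (he0m : StrictMonoOn e0 (Icc 0 1)) (he1m : StrictMonoOn e1 (Icc 0 1))
    (he0c : ContinuousOn e0 (Icc 0 1)) (he1c : ContinuousOn e1 (Icc 0 1))
    (he0map : MapsTo e0 (Icc 0 1) (Icc 0 1)) (he1map : MapsTo e1 (Icc 0 1) (Icc 0 1))
    (he0lip : ∃ c, 0 ≤ c ∧ c < 1 ∧ ∀ x ∈ Icc (0:ℝ) 1, ∀ y ∈ Icc (0:ℝ) 1, |e0 x - e0 y| ≤ c * |x - y|)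
    (he1lip : ∃ c, 0 ≤ c ∧ c < 1 ∧ ∀ x ∈ Icc (0:ℝ) 1, ∀ y ∈ Icc (0:ℝ) 1, |e1 x - e1 y| ≤ c * |x - y|)
    (he00 : e0 0 = 0) (he11 : e1 1 = 1)
    (he10pos : 0 < e1 0) (hovere0e1 : e1 0 < e0 1) (he01lt : e0 1 < 1)
    (hp : p ∈ Ioo (e1 0) (e0 1))
    (hk0 : ∀ x ∈ Icc (0:ℝ) 1, k0 (e0 x) = x) (hk1 : ∀ x ∈ Icc (0:ℝ) 1, k1 (e1 x) = x)
    (halpha : tauMinus g0 g1 q q = tauMinus k0 k1 p p)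
    (hbeta : tauPlus g0 g1 q q = tauPlus k0 k1 p p) :
    IsIccHomeo (fun x => piCode e0 e1 (tauPlus g0 g1 q x)) :=
  stmt12_general f0 f1 g0 g1 q hf0m hf1m hf0map hf1map hf0lip hf1lip hf00 hf11 hq hg0 hg1 e0 e1 k0
    k1 p he0m he1m he0map he1map he0lip he1lip he00 he11 hp hk0 hk1 halpha hbeta
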